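/- arXiv:1108.5422 — 6 statements merged into one kernel-verified Lean document; each statement's English description precedes it below -/
import Mathlib

section
/- Let x be a string and let u and v be strings such that u is a cover of x, v is a cover of x, and |u| < |v|. Then u is a cover of v. -/
/-- `w` is a (proper, aligned-style) cover of `x`: `|w| < |x|` and there is a set `P`
of 1-based starting positions in `{1,…,n−m+1}` such that `w` occurs at every
position of `P` and the occurrences cover every position `1,…,n`. -/
def IsCover {α : Type*} (w x : List α) : Prop :=
  w.length < x.length ∧
  ∃ P : Finset ℕ,
    (∀ i ∈ P, 1 ≤ i ∧ i ≤ x.length - w.length + 1) ∧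
    (∀ i ∈ P, (x.drop (i - 1)).take w.length = w) ∧
    (P.biUnion fun i => Finset.Icc i (i + w.length - 1)) = Finset.Icc 1 x.length

/-- `u` is a border of `x`: `u ≠ x` and `u` is both a prefix and a suffix of `x`. -/
def IsBorder {α : Type*} (u x : List α) : Prop :=
  u ≠ x ∧ u <+: x ∧ u <:+ x

/-- `C` is the minimal cover array of `x` (1-based): for `1 ≤ i ≤ |x|`, `C i` is the
length of the shortest cover of `x[1..i]` if one exists, and `0` otherwise. -/
def IsMinCoverArray {α : Type*} (x : List α) (C : ℕ → ℕ) : Prop :=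
  ∀ i, 1 ≤ i → i ≤ x.length →
    ((∀ w : List α, ¬ IsCover w (x.take i)) ∧ C i = 0) ∨
    (∃ w : List α, IsCover w (x.take i) ∧ C i = w.length ∧
      ∀ v : List α, IsCover v (x.take i) → w.length ≤ v.length)

/-- `C` is the maximal cover array of `x` (1-based): for `1 ≤ i ≤ |x|`, `C i` is the
length of the longest cover of `x[1..i]` if one exists, and `0` otherwise. -/
def IsMaxCoverArray {α : Type*} (x : List α) (C : ℕ → ℕ) : Prop :=
  ∀ i, 1 ≤ i → i ≤ x.length →
    ((∀ w : List α, ¬ IsCover w (x.take i)) ∧ C i = 0) ∨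
    (∃ w : List α, IsCover w (x.take i) ∧ C i = w.length ∧
      ∀ v : List α, IsCover v (x.take i) → v.length ≤ w.length)

/-- `B` is the border array of `x` (1-based): for `1 ≤ i ≤ |x|`, `B i` is the length
of the longest border of `x[1..i]`. -/
def IsBorderArray {α : Type*} (x : List α) (B : ℕ → ℕ) : Prop :=
  ∀ i, 1 ≤ i → i ≤ x.length →
    ∃ u : List α, IsBorder u (x.take i) ∧ B i = u.length ∧
      ∀ v : List α, IsBorder v (x.take i) → v.length ≤ u.length

/-- Position `j` of the cover array `C` (of a string of length `n`) is totally covered. -/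
def TotallyCovered (n : ℕ) (C : ℕ → ℕ) (j : ℕ) : Prop :=
  C j ≠ 0 ∧ ∃ i, j < i ∧ i ≤ n ∧ C i ≠ 0 ∧
    i - C i + 1 ≤ j - C j + 1 ∧ j - C j + 1 < j

/-- `CP` is the pruned minimal cover array obtained from `C`: entries at totally
covered positions are set to `0`, all other entries are kept. -/
def IsPrunedCoverArray (n : ℕ) (C CP : ℕ → ℕ) : Prop :=
  ∀ j, 1 ≤ j → j ≤ n →
    (TotallyCovered n C j → CP j = 0) ∧ (¬ TotallyCovered n C j → CP j = C j)

/-- The cover-graph relation `R_γ` on positions `{1,…,n}` induced by the array `γ`: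
`p R_γ q` iff there are `i` with `γ i ≠ 0` and `1 ≤ j ≤ γ i` with `{p,q} = {j, i−γ i + j}`. -/
def CoverRel (n : ℕ) (γ : ℕ → ℕ) (p q : ℕ) : Prop :=
  ∃ i j, 1 ≤ i ∧ i ≤ n ∧ γ i ≠ 0 ∧ 1 ≤ j ∧ j ≤ γ i ∧
    ({p, q} : Set ℕ) = {j, i - γ i + j}

/-!
Since `v` covers `x` it is a prefix of `x`, and since `u` and `v` both cover `x` they are suffixes
of `x`, so the shorter `u` is a suffix of `v`. The occurrences of `u` in `x` that end inside the
prefix `v` are occurrences in `v`, and the occurrence of `u` as a suffix of `v` covers the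
remaining positions of `v`.
-/

open Finset

theorem isCover_iff {α : Type*} {w x : List α} :
    IsCover w x ↔ w.length < x.length ∧ ∃ P : Finset ℕ,
      (∀ i ∈ P, 1 ≤ i ∧ i ≤ x.length - w.length + 1 ∧ (x.drop (i - 1)).take w.length = w) ∧
      ∀ j, 1 ≤ j → j ≤ x.length → ∃ i ∈ P, i ≤ j ∧ j < i + w.length := by
  constructor
  · rintro ⟨hlt, P, hP, hocc, hcov⟩
    refine ⟨hlt, P, fun i hi => ⟨(hP i hi).1, (hP i hi).2, hocc i hi⟩, fun j hj₁ hj₂ => ?_⟩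
    have hj : j ∈ P.biUnion fun i => Icc i (i + w.length - 1) := by
      rw [hcov, mem_Icc]
      exact ⟨hj₁, hj₂⟩
    simp only [mem_biUnion, mem_Icc] at hj
    obtain ⟨i, hi, hij, hji⟩ := hj
    exact ⟨i, hi, hij, by have := (hP i hi).1; omega⟩
  · rintro ⟨hlt, P, hP, hcov⟩
    refine ⟨hlt, P, fun i hi => ⟨(hP i hi).1, (hP i hi).2.1⟩, fun i hi => (hP i hi).2.2, ?_⟩
    ext j
    simp only [mem_biUnion, mem_Icc]
    constructor
    · rintro ⟨i, hi, hij, hji⟩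
      have := hP i hi
      omega
    · rintro ⟨hj₁, hj₂⟩
      obtain ⟨i, hi, hij, hji⟩ := hcov j hj₁ hj₂
      exact ⟨i, hi, hij, by omega⟩

theorem List.take_drop_of_isPrefix {α : Type*} {v x : List α} (h : v <+: x) {i m : ℕ}
    (him : i + m ≤ v.length) : (v.drop i).take m = (x.drop i).take m := by
  obtain ⟨t, rfl⟩ := h
  rw [List.drop_append_of_le_length (by omega), List.take_append_of_le_length (by rw [List.length_drop]; omega)]

namespace IsCover

variable {α : Type*} {u v x : List α}

theorem isPrefix (h : IsCover u x) : u <+: x := by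
  obtain ⟨hlt, P, hP, hcov⟩ := isCover_iff.1 h
  obtain ⟨i, hi, hi₁, -⟩ := hcov 1 le_rfl (by omega)
  obtain ⟨hi₀, -, hocc⟩ := hP i hi
  rw [show i = 1 by omega] at hocc
  rw [← hocc]
  exact List.take_prefix _ _

theorem isSuffix (h : IsCover u x) : u <:+ x := by
  obtain ⟨hlt, P, hP, hcov⟩ := isCover_iff.1 h
  obtain ⟨i, hi, -, hin⟩ := hcov x.length (by omega) le_rfl
  obtain ⟨-, hi₂, hocc⟩ := hP i hi
  rw [show i - 1 = x.length - u.length by omega, List.take_of_length_le (by rw [List.length_drop]; omega)] at hocc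
  rw [← hocc]
  exact List.drop_suffix _ _

theorem isCover_of_isPrefix (hu : IsCover u x) (hvx : v <+: x) (huv : u <:+ v)
    (hlen : u.length < v.length) : IsCover u v := by
  obtain ⟨-, P, hP, hcov⟩ := isCover_iff.1 hu
  set m := u.length
  set k := v.length
  have hkx : k ≤ x.length := hvx.length_le
  have hlast : (v.drop (k - m)).take m = u := by
    rw [List.take_of_length_le (by rw [List.length_drop]; omega), ← List.suffix_iff_eq_drop.1 huv]
  refine isCover_iff.2 ⟨hlen, insert (k - m + 1) (P.filter (· + m ≤ k + 1)), ?_, ?_⟩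
  · simp only [mem_insert, mem_filter]
    rintro i (rfl | ⟨hi, hik⟩)
    · exact ⟨by omega, by omega, by rwa [Nat.add_sub_cancel]⟩
    · obtain ⟨hi₁, -, hocc⟩ := hP i hi
      exact ⟨hi₁, by omega, by rw [List.take_drop_of_isPrefix hvx (by omega), hocc]⟩
  · intro j hj₁ hjk
    obtain ⟨i, hi, hij, hji⟩ := hcov j hj₁ (by omega)
    by_cases hik : i + m ≤ k + 1
    · exact ⟨i, mem_insert_of_mem (mem_filter.2 ⟨hi, hik⟩), hij, hji⟩
    · exact ⟨k - m + 1, mem_insert_self _ _, by omega, by omega⟩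

end IsCover

/-- If `u` and `v` both cover `x` and `|u| < |v|`, then `u` covers `v`. -/
theorem cover_of_cover_of_shorter {α : Type*} (x u v : List α)
    (hu : IsCover u x) (hv : IsCover v x) (hlen : u.length < v.length) :
    IsCover u v :=
  hu.isCover_of_isPrefix hv.isPrefix
    (List.suffix_of_suffix_length_le hu.isSuffix hv.isSuffix hlen.le) hlen
end

section
/- Let x be a string of length n with minimal cover array C. Let i and j be positions with 1 ≤ j < i ≤ n, C[i] ≠ 0, C[j] ≠ 0, and j−C[j] < i−C[i]. Then (i−C[i])−(j−C[j]) > C[j]/2, i.e., 2·((i−C[i])−(j−C[j])) > C[j]. -/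
/-!
If the two cover occurrences ending at `j` and at `i` overlapped by at least `C j / 2`, the
minimal cover `w` of `x[1..j]` would have a suffix of length `m ≥ |w| / 2` that lies inside an
occurrence of the cover of `x[1..i]`, hence equals the prefix `x[1..m]`. A border this long
covers `w`, and covers compose, so `x[1..m]` would be a shorter cover of `x[1..j]`.
-/

namespace IsCover

variable {α : Type*} {u w x : List α}

theorem length_pos (h : IsCover w x) : 0 < w.length := by
  obtain ⟨hlen, P, hP, -, hunion⟩ := h
  have h1 : 1 ∈ Finset.Icc 1 x.length := Finset.mem_Icc.mpr ⟨le_rfl, by omega⟩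
  rw [← hunion, Finset.mem_biUnion] at h1
  obtain ⟨p, hp, hp1⟩ := h1
  have := hP p hp
  rw [Finset.mem_Icc] at hp1
  omega

theorem take_length (h : IsCover w x) : x.take w.length = w := by
  have hpos := h.length_pos
  obtain ⟨hlen, P, hP, hocc, hunion⟩ := h
  have h1 : 1 ∈ Finset.Icc 1 x.length := Finset.mem_Icc.mpr ⟨le_rfl, by omega⟩
  rw [← hunion, Finset.mem_biUnion] at h1
  obtain ⟨p, hp, hp1⟩ := h1
  rw [Finset.mem_Icc] at hp1
  obtain rfl : p = 1 := by have := hP p hp; omega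
  simpa using hocc 1 hp

theorem drop_length_sub (h : IsCover w x) : x.drop (x.length - w.length) = w := by
  have hpos := h.length_pos
  obtain ⟨hlen, P, hP, hocc, hunion⟩ := h
  have hn : x.length ∈ Finset.Icc 1 x.length := Finset.mem_Icc.mpr ⟨by omega, le_rfl⟩
  rw [← hunion, Finset.mem_biUnion] at hn
  obtain ⟨p, hp, hpn⟩ := hn
  rw [Finset.mem_Icc] at hpn
  obtain rfl : p = x.length - w.length + 1 := by have := hP p hp; omega
  have hshort : (x.drop (x.length - w.length)).length ≤ w.length := by
    rw [List.length_drop]; omega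
  conv_rhs => rw [← hocc _ hp, Nat.add_sub_cancel]
  exact (List.take_of_length_le hshort).symm

theorem drop_take_eq_take {k i : ℕ} (hi : i ≤ x.length) (h : IsCover (x.take k) (x.take i)) :
    (x.drop (i - k)).take k = x.take k := by
  have hki : k < i := by
    have := h.1
    rw [List.length_take, List.length_take, min_eq_left hi] at this
    omega
  have hsuffix := h.drop_length_sub
  rwa [List.length_take, List.length_take, min_eq_left hi, min_eq_left (by omega),
    List.drop_take, Nat.sub_sub_self hki.le] at hsuffix

theorem trans (huw : IsCover u w) (hwx : IsCover w x) : IsCover u x := by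
  obtain ⟨hlu, Q, hQ, hQocc, hQunion⟩ := huw
  obtain ⟨hlw, P, hP, hPocc, hPunion⟩ := hwx
  have hQmem := fun k => (Finset.ext_iff.mp hQunion k).symm
  have hPmem := fun k => (Finset.ext_iff.mp hPunion k).symm
  simp only [Finset.mem_biUnion, Finset.mem_Icc] at hQmem hPmem
  refine ⟨hlu.trans hlw, (P ×ˢ Q).image fun pq => pq.1 + pq.2 - 1, ?_, ?_, ?_⟩
  · simp only [Finset.mem_image, Finset.mem_product, Prod.exists]
    rintro _ ⟨p, q, ⟨hp, hq⟩, rfl⟩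
    have := hP p hp
    have := hQ q hq
    omega
  · simp only [Finset.mem_image, Finset.mem_product, Prod.exists]
    rintro _ ⟨p, q, ⟨hp, hq⟩, rfl⟩
    have := hP p hp
    have := hQ q hq
    have hdrop : x.drop (p + q - 1 - 1) = (x.drop (p - 1)).drop (q - 1) := by
      rw [List.drop_drop]; congr 1; omega
    rw [hdrop]
    conv_rhs => rw [← hQocc q hq, ← hPocc p hp]
    rw [List.drop_take, List.take_take, min_eq_left (by omega)]
  · ext k
    simp only [Finset.mem_biUnion, Finset.mem_image, Finset.mem_product, Prod.exists,
      Finset.mem_Icc]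
    constructor
    · rintro ⟨_, ⟨p, q, ⟨hp, hq⟩, rfl⟩, hk⟩
      have := hP p hp
      have := hQ q hq
      omega
    · intro hk
      obtain ⟨p, hp, hpk⟩ := (hPmem k).mp hk
      obtain ⟨q, hq, hqk⟩ := (hQmem (k + 1 - p)).mp (by omega)
      exact ⟨_, ⟨p, q, ⟨hp, hq⟩, rfl⟩, by omega⟩

end IsCover

theorem isCover_take_of_take_eq_drop {α : Type*} {w : List α} {m : ℕ}
    (hm : m < w.length) (hw : w.length ≤ 2 * m) (hborder : w.take m = w.drop (w.length - m)) :
    IsCover (w.take m) w := by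
  have hlen : (w.take m).length = m := List.length_take_of_le hm.le
  refine ⟨by omega, {1, w.length - m + 1}, ?_, ?_, ?_⟩
  · simp only [Finset.mem_insert, Finset.mem_singleton, hlen]
    rintro _ (rfl | rfl) <;> omega
  · simp only [Finset.mem_insert, Finset.mem_singleton, hlen]
    rintro _ (rfl | rfl)
    · simp
    · rw [Nat.add_sub_cancel, hborder]
      exact List.take_of_length_le (by simp only [List.length_drop]; omega)
  · ext k
    simp only [Finset.mem_biUnion, Finset.mem_insert, Finset.mem_singleton, Finset.mem_Icc,
      hlen, exists_eq_or_imp, exists_eq_left]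
    omega

theorem IsMinCoverArray.isCover_take {α : Type*} {x : List α} {C : ℕ → ℕ}
    (hC : IsMinCoverArray x C) {i : ℕ} (hi : 1 ≤ i) (hin : i ≤ x.length) (hCi : C i ≠ 0) :
    C i < i ∧ IsCover (x.take (C i)) (x.take i) ∧
      ∀ v, IsCover v (x.take i) → C i ≤ v.length := by
  rcases hC i hi hin with ⟨-, h0⟩ | ⟨w, hw, hCw, hmin⟩
  · exact absurd h0 hCi
  have hlt : w.length < i := by simpa [hin] using hw.1
  rw [hCw]
  refine ⟨hlt, ?_, hmin⟩
  have hpre := hw.take_length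
  rw [List.take_take, min_eq_left hlt.le] at hpre
  rwa [hpre]

/-- For positions `j < i` with `C i ≠ 0`, `C j ≠ 0` and
`j − C j < i − C i`, we have `(i − C i) − (j − C j) > C j / 2`,
i.e. `2·((i − C i) − (j − C j)) > C j`. -/
theorem minCoverArray_gap {α : Type*} (x : List α) (C : ℕ → ℕ)
    (hC : IsMinCoverArray x C) (i j : ℕ)
    (hj1 : 1 ≤ j) (hji : j < i) (hin : i ≤ x.length)
    (hCi : C i ≠ 0) (hCj : C j ≠ 0)
    (hlt : j - C j < i - C i) :
    C j < 2 * ((i - C i) - (j - C j)) := by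
  by_contra! hclose
  have hjn : j ≤ x.length := hji.le.trans hin
  obtain ⟨hCii, hcover_i, -⟩ := hC.isCover_take (by omega) hin hCi
  obtain ⟨hCjj, hcover_j, hmin⟩ := hC.isCover_take hj1 hjn hCj
  set m := j - (i - C i)
  have hborder : (x.take (C j)).take m = (x.take (C j)).drop (C j - m) := by
    have hoverlap : (x.drop (i - C i)).take m = x.take m := by
      have := congrArg (List.take m) (hcover_i.drop_take_eq_take hin)
      rwa [List.take_take, List.take_take, min_eq_left (by omega)] at this
    rw [List.take_take, min_eq_left (by omega), ← hcover_j.drop_take_eq_take hjn,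
      List.drop_take, List.drop_drop, ← hoverlap]
    congr 2 <;> omega
  have hshorter : IsCover (x.take m) (x.take j) := by
    have hlen : (x.take (C j)).length = C j := List.length_take_of_le (by omega)
    have := (isCover_take_of_take_eq_drop (m := m) (by omega) (by omega) (by rwa [hlen])).trans
      hcover_j
    rwa [List.take_take, min_eq_left (show m ≤ C j by omega)] at this
  have := hmin _ hshorter
  rw [List.length_take_of_le (by omega)] at this
  omega
end

section
/- Let x be a string of length n with minimal cover array C and border array B. For every position i with 2 ≤ i ≤ n, if B[i] ≤ B[i−1], then C[i] = 0. -/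
/-!
Let `y = x[1..i]` have a cover `w` of length `m`, and let `v` be the longest border of `y`
without its last letter, so `|v| = B[i-1] ≥ B[i] ≥ m`. Transporting the suffix occurrence of
`w` along the period `i - 1 - |v|` of `x[1..i-1]` shows that `w` minus its last letter occurs
ending just before position `|v| + 1`. In a string covered by `w`, every such occurrence
extends to a full occurrence of `w`: otherwise the two nearest occurrences of `w` around it
give `w` two periods with sum at most `|w|`, and Euclid's algorithm on these periods forces
the missing letter. Hence `y[|v| + 1] = y[i]`, so `v` extends to a border of `y` of length
`B[i-1] + 1 > B[i]`, a contradiction.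
-/

section Periodicity

variable {β : Type*}

theorem apply_sub_eq_of_two_periods (f : ℕ → β) {p q L : ℕ} (hp : 0 < p) (hq : 0 < q)
    (hpq : p + q ≤ L + 1) (hfp : ∀ k, k + p < L → f k = f (k + p))
    (hfq : ∀ k, k + q < L → f k = f (k + q)) : f (L - p) = f (L - q) := by
  induction hs : p + q using Nat.strong_induction_on generalizing p q L with
  | _ s ih =>
  wlog hle : p ≤ q generalizing p q
  · exact (this hq hp (by omega) hfq hfp (by omega) (by omega)).symm
  obtain rfl | hlt := hle.eq_or_lt
  · rfl
  -- Euclid's step: on the first `L - p` letters, `q - p` is a period as well.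
  have hfqp : ∀ k, k + (q - p) < L - p → f k = f (k + (q - p)) := fun k hk => by
    rw [hfq k (by omega), hfp (k + (q - p)) (by omega)]
    congr 1
    omega
  calc f (L - p) = f (L - p - p) := by
        rw [hfp (L - p - p) (by omega)]
        congr 1
        omega
    _ = f (L - p - (q - p)) :=
        ih q (by omega) hp (by omega) (by omega) (fun k hk => hfp k (by omega)) hfqp (by omega)
    _ = f (L - q) := by
        congr 1
        omega

end Periodicity

section Occurrences

variable {β : Type*}

/-- Words are encoded as functions `ℕ → β` (0-based) with an explicit length `m`. -/
def OccursAt (Y W : ℕ → β) (m a : ℕ) : Prop :=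
  ∀ k < m, Y (a + k) = W k

def CoveredBy (Y : ℕ → β) (n : ℕ) (W : ℕ → β) (m : ℕ) : Prop :=
  ∀ j < n, ∃ a, a + m ≤ n ∧ a ≤ j ∧ j < a + m ∧ OccursAt Y W m a

theorem OccursAt.extend_of_coveredBy {Y W : ℕ → β} {n m t : ℕ} (hcov : CoveredBy Y n W m)
    (ht : t + m ≤ n) (hnear : OccursAt Y W (m - 1) t) : OccursAt Y W m t := by
  classical
  intro k hk
  obtain hk' | rfl : k < m - 1 ∨ k = m - 1 := by omega
  · exact hnear k hk'
  obtain ⟨a₀, ha₀n, ha₀t, ht₀, ha₀⟩ := hcov t (by omega)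
  obtain rfl | ha₀t := ha₀t.eq_or_lt
  · exact ha₀ _ hk
  -- `b` is the last occurrence of `W` starting before `t`, and `a` one covering the position
  -- just after its end; their offsets from `t` are two periods of `W`.
  let IsOcc a := a + m ≤ n ∧ OccursAt Y W m a
  set b := Nat.findGreatest IsOcc (t - 1)
  have hb : IsOcc b := Nat.findGreatest_spec (P := IsOcc) (by omega) ⟨ha₀n, ha₀⟩
  have hba₀ : a₀ ≤ b := Nat.le_findGreatest (by omega) ⟨ha₀n, ha₀⟩
  have hbt : b < t := by have := Nat.findGreatest_le (P := IsOcc) (t - 1); omega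
  obtain ⟨a, han, hab, hba, ha⟩ := hcov (b + m) (by omega)
  have hta : t ≤ a := by
    by_contra! hat
    exact Nat.findGreatest_is_greatest (P := IsOcc) (n := t - 1) (k := a) (by omega) (by omega)
      ⟨han, ha⟩
  obtain rfl | hta := hta.eq_or_lt
  · exact ha _ hk
  have hperiod_b : ∀ k, k + (t - b) < m → W k = W (k + (t - b)) := fun k hk => by
    rw [← hnear k (by omega), ← hb.2 _ hk]
    congr 1
    omega
  have hperiod_a : ∀ k, k + (a - t) < m - 1 → W k = W (k + (a - t)) := fun k hk => by
    rw [← hnear _ hk, ← ha k (by omega)]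
    congr 1
    omega
  have htwo := apply_sub_eq_of_two_periods W (L := m - 1) (by omega) (by omega) (by omega)
    hperiod_a (fun k hk => hperiod_b k (by omega))
  calc Y (t + (m - 1)) = W (m - 1 - (a - t)) := by
        rw [← ha _ (by omega)]
        congr 1
        omega
    _ = W (m - 1 - (t - b)) := htwo
    _ = W (m - 1) := by
        rw [hperiod_b _ (by omega)]
        congr 1
        omega

end Occurrences

section Borders

variable {α : Type*}

theorem IsBorder.length_lt {u x : List α} (h : IsBorder u x) : u.length < x.length :=
  lt_of_le_of_ne h.2.1.length_le fun hlen => h.1 (h.2.1.eq_of_length hlen)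

theorem IsBorder.getElem?_eq {u x : List α} (h : IsBorder u x) {k : ℕ} (hk : k < u.length) :
    x[k]? = x[x.length - u.length + k]? := by
  have hsuf := (List.suffix_iff_getElem?.mp h.2.2).2 k hk
  rw [List.prefix_iff_getElem?.mp h.2.1 k hk, ← hsuf]
  congr 1
  have := h.length_lt
  omega

theorem isBorder_take_of_getElem?_eq {x : List α} {b : ℕ} (hb : b < x.length)
    (h : ∀ k < b, x[k]? = x[x.length - b + k]?) : IsBorder (x.take b) x := by
  refine ⟨fun he => ?_, List.take_prefix _ _, ?_⟩
  · have := congrArg List.length he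
    simp only [List.length_take] at this
    omega
  have htake : x.take b = x.drop (x.length - b) := by
    refine List.ext_getElem? fun k => ?_
    rw [List.getElem?_take, List.getElem?_drop]
    split_ifs with hk
    · exact h k hk
    · exact (List.getElem?_eq_none (by omega)).symm
  exact htake ▸ List.drop_suffix _ _

theorem IsCover.coveredBy {w x : List α} (h : IsCover w x) :
    CoveredBy (x[·]?) x.length (w[·]?) w.length := by
  obtain ⟨hlt, P, hPrange, hPocc, hPunion⟩ := h
  intro j hj
  have hmem : j + 1 ∈ P.biUnion fun p => Finset.Icc p (p + w.length - 1) := by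
    rw [hPunion, Finset.mem_Icc]
    omega
  obtain ⟨p, hp, hjp⟩ := Finset.mem_biUnion.mp hmem
  rw [Finset.mem_Icc] at hjp
  have := hPrange p hp
  refine ⟨p - 1, by omega, by omega, by omega, fun k hk => ?_⟩
  show x[p - 1 + k]? = w[k]?
  rw [← hPocc p hp, List.getElem?_take, if_pos hk, List.getElem?_drop]

theorem IsCover.isBorder {w x : List α} (h : IsCover w x) : IsBorder w x := by
  have hlt := h.1
  obtain ⟨a, -, ha, -, hprefix⟩ := h.coveredBy 0 (by omega)
  obtain ⟨b, hb, -, hb', hsuffix⟩ := h.coveredBy (x.length - 1) (by omega)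
  obtain rfl : a = 0 := by omega
  obtain rfl : b = x.length - w.length := by omega
  have hw : x.take w.length = w := List.ext_getElem? fun k => by
    rw [List.getElem?_take]
    split_ifs with hk
    · simpa using hprefix k hk
    · exact (List.getElem?_eq_none (by omega)).symm
  exact hw ▸ isBorder_take_of_getElem?_eq hlt fun k hk => by
    simpa using (hprefix k hk).trans (hsuffix k hk).symm

theorem IsCover.isBorder_take_succ {w y v : List α} (hw : IsCover w y)
    (hv : IsBorder v y.dropLast) (hwv : w.length ≤ v.length) :
    IsBorder (y.take (v.length + 1)) y := by
  have hvlt : v.length < y.length - 1 := by simpa using hv.length_lt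
  have hwpos : 0 < w.length := by
    obtain ⟨a, -, ha, ha', -⟩ := hw.coveredBy 0 (by omega)
    omega
  have hperiod : ∀ k < v.length, y[k]? = y[y.length - 1 - v.length + k]? := fun k hk => by
    have := hv.getElem?_eq hk
    rwa [List.length_dropLast, List.getElem?_dropLast, List.getElem?_dropLast, if_pos (by omega),
      if_pos (by omega)] at this
  have hsuffix : OccursAt (y[·]?) (w[·]?) w.length (y.length - w.length) := fun k hk => by
    have := (List.suffix_iff_getElem?.mp hw.isBorder.2.2).2 k hk
    simp only [List.getElem?_eq_getElem hk]
    rw [← this]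
    congr 1
    omega
  -- The period `y.length - 1 - v.length` moves the suffix occurrence of `w` to end at `v.length`.
  have hnear : OccursAt (y[·]?) (w[·]?) (w.length - 1) (v.length + 1 - w.length) :=
    fun k hk => by
      rw [← hsuffix k (by omega)]
      simp only [hperiod _ (show v.length + 1 - w.length + k < v.length by omega)]
      congr 1
      omega
  have hlast := hnear.extend_of_coveredBy hw.coveredBy (by omega) (w.length - 1) (by omega)
  refine isBorder_take_of_getElem?_eq (by omega) fun k hk => ?_
  obtain hk | rfl : k < v.length ∨ k = v.length := by omega
  · rw [hperiod k hk]
    congr 1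
    omega
  · have := hsuffix (w.length - 1) (by omega)
    simp only at hlast this
    rw [show v.length + 1 - w.length + (w.length - 1) = v.length by omega] at hlast
    rw [hlast, ← this]
    congr 1
    omega

end Borders

/-- If `B i ≤ B (i−1)` then `C i = 0`, for `2 ≤ i ≤ n`. -/
theorem coverArray_zero_of_border_nonincreasing {α : Type*} (x : List α) (C B : ℕ → ℕ)
    (hC : IsMinCoverArray x C) (hB : IsBorderArray x B)
    (i : ℕ) (hi1 : 2 ≤ i) (hi2 : i ≤ x.length)
    (h : B i ≤ B (i - 1)) : C i = 0 := by
  rcases hC i (by omega) hi2 with ⟨-, hCi⟩ | ⟨w, hw, -, -⟩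
  · exact hCi
  obtain ⟨u, -, hBi, hu⟩ := hB i (by omega) hi2
  obtain ⟨v, hv, hBi', -⟩ := hB (i - 1) (by omega) (by omega)
  have hprev : x.take (i - 1) = (x.take i).dropLast := by
    rw [List.dropLast_eq_take, List.length_take, List.take_take]
    congr 1
    omega
  rw [hprev] at hv
  have hwv : w.length ≤ v.length := by
    have := hu w hw.isBorder
    omega
  have hext := hu _ (hw.isBorder_take_succ hv hwv)
  have hvlt := hv.length_lt
  simp only [List.length_take, List.length_dropLast] at hext hvlt
  omega
end

section
/- Let x be a string of length n with border array B, and let i be a position with 2 ≤ i ≤ n. Set k = B[i−1]. If x[i] ≠ x[k+1], then B[i] ≤ k, i.e., B[i] ≤ B[i−1]. -/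
/-!
If the longest border `u` of `x[1..i]` were longer than `k = B[i-1]`, then `u` without its last
letter would be a border of `x[1..i-1]`, so `|u| = k + 1`. Since `u` is both a prefix and a suffix
of `x[1..i]`, its last letter is then both `x[k+1]` and `x[i]`.
-/

namespace List

variable {α : Type*} {u a : List α}

theorem IsPrefix.getElem? (h : u <+: a) {j : ℕ} (hj : j < u.length) : a[j]? = u[j]? := by
  rw [prefix_iff_getElem?.mp h j hj, getElem?_eq_getElem hj]

theorem IsSuffix.getLast? (h : u <:+ a) (hu : u ≠ []) : a.getLast? = u.getLast? := by
  rw [getLast?_eq_some_getLast hu, getLast?_eq_some_getLast (h.ne_nil hu), h.getLast hu]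

theorem IsPrefix.dropLast (h : u <+: a) : u.dropLast <+: a.dropLast := by
  obtain ⟨t, rfl⟩ := h
  rcases eq_or_ne t [] with rfl | ht
  · simp
  · rw [dropLast_append_of_ne_nil ht]
    exact (dropLast_prefix u).trans (prefix_append u _)

theorem IsSuffix.dropLast (h : u <:+ a) : u.dropLast <:+ a.dropLast := by
  obtain ⟨w, rfl⟩ := h
  rcases eq_or_ne u [] with rfl | hu
  · simp
  · exact ⟨w, (dropLast_append_of_ne_nil hu).symm⟩

theorem dropLast_take_of_le_length {i : ℕ} (hi : i ≤ a.length) :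
    (a.take i).dropLast = a.take (i - 1) := by
  rw [dropLast_eq_take, length_take_of_le hi, take_take, Nat.min_eq_left (Nat.sub_le i 1)]

end List

namespace IsBorder

variable {α : Type*} {u a : List α}

theorem length_lt_s14 (h : IsBorder u a) : u.length < a.length :=
  lt_of_le_of_ne h.2.1.length_le fun hlen => h.1 (h.2.1.eq_of_length hlen)

theorem dropLast (h : IsBorder u a) (hu : u ≠ []) : IsBorder u.dropLast a.dropLast := by
  refine ⟨fun heq => ?_, h.2.1.dropLast, h.2.2.dropLast⟩
  have hlen := congrArg List.length heq
  have := h.length_lt_s14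
  have : u.length ≠ 0 := by simpa using hu
  simp only [List.length_dropLast] at hlen
  omega

end IsBorder

theorem borderArray_le_of_mismatch_general {α : Type*} (x : List α) (B : ℕ → ℕ)
    (hB : IsBorderArray x B) (i : ℕ) (hi2 : i ≤ x.length)
    (hne : x[i - 1]? ≠ x[B (i - 1)]?) :
    B i ≤ B (i - 1) := by
  by_contra! hlt
  have hi0 : i ≠ 0 := by rintro rfl; exact lt_irrefl _ hlt
  obtain ⟨u, hu, hBu, -⟩ := hB i (Nat.one_le_iff_ne_zero.mpr hi0) hi2
  have hlen : (x.take i).length = i := List.length_take_of_le hi2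
  have hui : u.length < i := hlen ▸ hu.length_lt_s14
  have hu0 : u ≠ [] := List.ne_nil_of_length_pos (by omega)
  obtain ⟨v, -, hBv, hvmax⟩ := hB (i - 1) (by omega) (by omega)
  have hshort := hvmax _ (List.dropLast_take_of_le_length hi2 ▸ hu.dropLast hu0)
  rw [List.length_dropLast] at hshort
  have hk : B (i - 1) = u.length - 1 := by omega
  refine hne ?_
  calc x[i - 1]? = (x.take i).getLast? := by
        rw [List.getLast?_eq_getElem?, hlen, List.getElem?_take_of_lt (by omega)]
    _ = u.getLast? := hu.2.2.getLast? hu0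
    _ = (x.take i)[u.length - 1]? := by
        rw [List.getLast?_eq_getElem?, hu.2.1.getElem? (by omega)]
    _ = x[B (i - 1)]? := by rw [hk, List.getElem?_take_of_lt (by omega)]

/-- With `k = B (i−1)`, if `x[i] ≠ x[k+1]` (1-based) then `B i ≤ B (i−1)`. -/
theorem borderArray_le_of_mismatch {α : Type*} (x : List α) (B : ℕ → ℕ)
    (hB : IsBorderArray x B) (i : ℕ) (hi1 : 2 ≤ i) (hi2 : i ≤ x.length)
    (hne : x[i - 1]? ≠ x[B (i - 1)]?) :
    B i ≤ B (i - 1) :=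
  borderArray_le_of_mismatch_general x B hB i hi2 hne
end

section
/- Let x be a string of length n with minimal cover array C, and let C^P be the pruned minimal cover array obtained from C. Then the equivalence relation on positions {1,…,n} generated by the relation R_{C^P} equals the equivalence relation generated by the relation R_C; that is, pruning does not change the connected components of the cover graph. -/
/-!
Every edge of `R_{C^P}` is an edge of `R_C`. Conversely, write `u ~ v` for `R_{C^P}`-connectivity.
By strong induction on `k`: whenever `x[1..m]` covers `x[1..k]`, every `t ≤ m` satisfies
`t ~ t + (k - m)`; for `m = C[k]` these pairs are the edges of `R_C` contributed by `k`.

For `m = C[k]` with `k` not totally covered they are edges of `R_{C^P}`. Otherwise let `i` be the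
largest position whose last cover occurrence contains that of `k`; then `i` is not totally
covered. As `x[1..i]` ends with `x[1..C[i]]`, the prefix `x[1..C[k]]` recurs at offset
`δ = (k - C[k]) - (i - C[i])`, hence covers the shorter prefix `x[1..δ + C[k]]`; the shift by
`k - C[k]` is the shift by `δ` followed by an edge of `i`.

For `m > C[k]`, `C[k]` also covers `x[1..m]`. Each `t ≤ m` lies in an occurrence of `x[1..C[k]]`
inside `x[1..m]`, and `t + (k - m)` in the copy of that occurrence inside the suffix
`x[k-m+1..k]`; both are reached from the same position `u ≤ C[k]` by shifts of covers of shorter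
prefixes (or of `x[1..k]` by `C[k]`).
-/

/-- The prefix of length `m` of `x` occurs at the 0-based offset `d`. -/
def PrefixOccursAt {α : Type*} (x : List α) (d m : ℕ) : Prop := ∀ q < m, x[d + q]? = x[q]?

def PrefixCovers {α : Type*} (x : List α) (m k : ℕ) : Prop :=
  1 ≤ m ∧ m < k ∧ k ≤ x.length ∧
  ∃ P : Finset ℕ,
    (∀ s ∈ P, 1 ≤ s ∧ s + m ≤ k + 1) ∧
    (∀ s ∈ P, PrefixOccursAt x (s - 1) m) ∧
    (P.biUnion fun s => Finset.Icc s (s + m - 1)) = Finset.Icc 1 k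

section Occurrences

variable {α : Type*} {x : List α}

theorem prefixOccursAt_iff_drop_take {d m : ℕ} :
    PrefixOccursAt x d m ↔ (x.drop d).take m = x.take m := by
  refine ⟨fun h => List.ext_getElem? fun q => ?_, fun h q hq => ?_⟩
  · rw [List.getElem?_take, List.getElem?_take, List.getElem?_drop]
    split_ifs with hq
    exacts [h q hq, rfl]
  · simpa [List.getElem?_take, List.getElem?_drop, hq] using congrArg (·[q]?) h

theorem PrefixOccursAt.add {a b m c : ℕ} (h₁ : PrefixOccursAt x a m) (h₂ : PrefixOccursAt x b c)
    (hbc : b + c ≤ m) : PrefixOccursAt x (a + b) c := fun q hq => by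
  rw [Nat.add_assoc, h₁ (b + q) (by omega), h₂ q hq]

theorem PrefixOccursAt.sub {a b m c : ℕ} (h₁ : PrefixOccursAt x a m) (h₂ : PrefixOccursAt x b c)
    (hab : a ≤ b) (hbc : b + c ≤ a + m) : PrefixOccursAt x (b - a) c := fun q hq => by
  rw [← h₁ (b - a + q) (by omega), ← Nat.add_assoc, Nat.add_sub_cancel' hab, h₂ q hq]

end Occurrences

section PrefixCovers

variable {α : Type*} {x : List α} {m k : ℕ}

theorem isCover_take_iff {w : List α} (hk : k ≤ x.length) :
    IsCover w (x.take k) ↔ w = x.take w.length ∧ PrefixCovers x w.length k := by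
  have hxk : (x.take k).length = k := List.length_take_of_le hk
  have take_take_drop : ∀ s, s + w.length ≤ k →
      ((x.take k).drop s).take w.length = (x.drop s).take w.length := fun s hs => by
    rw [List.drop_take, List.take_take, Nat.min_eq_left (by omega)]
  constructor
  · rintro ⟨hlen, P, hbd, hocc, hcov⟩
    rw [hxk] at hlen hbd hcov
    have h1 : (1 : ℕ) ∈ P.biUnion fun s => Finset.Icc s (s + w.length - 1) := by
      rw [hcov]; simp only [Finset.mem_Icc]; omega
    obtain ⟨s, hsP, hs⟩ := Finset.mem_biUnion.mp h1
    rw [Finset.mem_Icc] at hs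
    have hs1 : s = 1 := by have := hbd s hsP; omega
    subst hs1
    have hw := hocc 1 hsP
    rw [Nat.sub_self, List.drop_zero, List.take_take, Nat.min_eq_left (by omega)] at hw
    replace hw := hw.symm
    refine ⟨hw, by omega, hlen, hk, P, fun s hs => by have := hbd s hs; omega,
      fun s hs => ?_, hcov⟩
    have := hbd s hs
    rw [prefixOccursAt_iff_drop_take, ← take_take_drop _ (by omega), hocc s hs, ← hw]
  · rintro ⟨hw, hm1, hmk, -, P, hbd, hocc, hcov⟩
    refine ⟨by omega, P, fun s hs => by have := hbd s hs; omega, fun s hs => ?_, by rwa [hxk]⟩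
    have := hbd s hs
    rw [take_take_drop _ (by omega), hw, List.length_take, Nat.min_eq_left (by omega),
      ← prefixOccursAt_iff_drop_take]
    exact hocc s hs

theorem PrefixCovers.exists_occursAt (h : PrefixCovers x m k) {t : ℕ} (ht : 1 ≤ t)
    (htk : t ≤ k) :
    ∃ d, d < t ∧ t ≤ d + m ∧ d + m ≤ k ∧ PrefixOccursAt x d m := by
  obtain ⟨-, -, -, P, hbd, hocc, hcov⟩ := h
  have hmem : t ∈ P.biUnion fun s => Finset.Icc s (s + m - 1) := by
    rw [hcov, Finset.mem_Icc]; exact ⟨ht, htk⟩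
  obtain ⟨s, hsP, hts⟩ := Finset.mem_biUnion.mp hmem
  rw [Finset.mem_Icc] at hts
  have := hbd s hsP
  exact ⟨s - 1, by omega, by omega, by omega, hocc s hsP⟩

theorem PrefixCovers.occursAt_suffix (h : PrefixCovers x m k) : PrefixOccursAt x (k - m) m := by
  obtain ⟨d, hdk, hkd, hdm, hd⟩ := h.exists_occursAt (by have := h.2.1; omega) le_rfl
  rwa [show k - m = d by omega]

theorem PrefixCovers.extend (h : PrefixCovers x m k) {d : ℕ} (hd : 1 ≤ d)
    (hocc : PrefixOccursAt x d m) (hdk : d + m ≤ k) : PrefixCovers x m (d + m) := by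
  classical
  obtain ⟨hm1, -, hkn, P, hbd, hoccP, hcov⟩ := h
  refine ⟨hm1, by omega, by omega, {s ∈ P | s ≤ d + 1} ∪ {d + 1}, ?_, ?_, ?_⟩
  · simp only [Finset.mem_union, Finset.mem_filter, Finset.mem_singleton]
    rintro s (⟨hs, hsd⟩ | rfl)
    · have := hbd s hs; omega
    · omega
  · simp only [Finset.mem_union, Finset.mem_filter, Finset.mem_singleton]
    rintro s (⟨hs, -⟩ | rfl)
    exacts [hoccP s hs, by simpa using hocc]
  · ext p
    simp only [Finset.mem_biUnion, Finset.mem_union, Finset.mem_filter, Finset.mem_singleton,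
      Finset.mem_Icc]
    constructor
    · rintro ⟨s, ⟨hs, hsd⟩ | rfl, hp⟩
      · have := hbd s hs; omega
      · omega
    · rintro ⟨hp1, hp2⟩
      by_cases hpd : d + 1 ≤ p
      · exact ⟨d + 1, Or.inr rfl, by omega, by omega⟩
      · have hpk : p ∈ P.biUnion fun s => Finset.Icc s (s + m - 1) := by
          rw [hcov, Finset.mem_Icc]; omega
        obtain ⟨s, hsP, hp⟩ := Finset.mem_biUnion.mp hpk
        rw [Finset.mem_Icc] at hp
        exact ⟨s, Or.inl ⟨hsP, by omega⟩, hp⟩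

theorem PrefixCovers.of_shorter {c : ℕ} (hm : PrefixCovers x m k) (hc : PrefixCovers x c k)
    (hcm : c < m) : PrefixCovers x c m := by
  have := hm.2.1
  have := hc.2.1
  have hocc := hm.occursAt_suffix.sub hc.occursAt_suffix (by omega) (by omega)
  rw [show k - c - (k - m) = m - c by omega] at hocc
  simpa [Nat.sub_add_cancel hcm.le] using hc.extend (by omega) hocc (by omega)

end PrefixCovers

section MinCoverArray

variable {α : Type*} {x : List α} {C : ℕ → ℕ}

theorem IsMinCoverArray.prefixCovers (hC : IsMinCoverArray x C) {i : ℕ} (hi : 1 ≤ i)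
    (hin : i ≤ x.length) (hCi : C i ≠ 0) : PrefixCovers x (C i) i := by
  rcases hC i hi hin with ⟨-, h0⟩ | ⟨w, hw, hlen, -⟩
  · exact absurd h0 hCi
  · exact hlen ▸ ((isCover_take_iff hin).mp hw).2

theorem IsMinCoverArray.le_of_prefixCovers (hC : IsMinCoverArray x C) {m k : ℕ}
    (h : PrefixCovers x m k) : C k ≠ 0 ∧ C k ≤ m := by
  obtain ⟨hm1, hmk, hkn, -⟩ := id h
  have hmx : (x.take m).length = m := List.length_take_of_le (by omega)
  have hcov : IsCover (x.take m) (x.take k) :=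
    (isCover_take_iff hkn).mpr (by rw [hmx]; exact ⟨rfl, h⟩)
  rcases hC k (by omega) hkn with ⟨hno, -⟩ | ⟨w, hw, hlen, hmin⟩
  · exact absurd hcov (hno _)
  · have := hmin _ hcov
    have := ((isCover_take_iff hkn).mp hw).2.1
    omega

end MinCoverArray

theorem exists_not_totallyCovered {n : ℕ} {C : ℕ → ℕ} {k : ℕ} (h : TotallyCovered n C k) :
    ∃ i, k < i ∧ i ≤ n ∧ C i ≠ 0 ∧ i - C i ≤ k - C k ∧ ¬ TotallyCovered n C i := by
  classical
  obtain ⟨-, i₀, hki₀, hi₀n, hCi₀, hi₀, -⟩ := h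
  let P : ℕ → Prop := fun i => k < i ∧ C i ≠ 0 ∧ i - C i ≤ k - C k
  have hP : P (Nat.findGreatest P n) := Nat.findGreatest_spec hi₀n ⟨hki₀, hCi₀, by omega⟩
  refine ⟨_, hP.1, Nat.findGreatest_le n, hP.2.1, hP.2.2, ?_⟩
  rintro ⟨-, i, hi, hin, hCi, hi', -⟩
  have := Nat.le_findGreatest (P := P) hin ⟨by omega, hCi, by omega⟩
  omega

def ShiftConnected (R : ℕ → ℕ → Prop) (m d : ℕ) : Prop :=
  ∀ t, 1 ≤ t → t ≤ m → Relation.EqvGen R t (t + d)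

theorem shiftConnected_coverRel {n : ℕ} {γ : ℕ → ℕ} {i : ℕ} (hi : 1 ≤ i) (hin : i ≤ n)
    (hγi : γ i ≠ 0) : ShiftConnected (CoverRel n γ) (γ i) (i - γ i) := fun t ht htγ =>
  .rel _ _ ⟨i, t, hi, hin, hγi, ht, htγ, by rw [Nat.add_comm t]⟩

section Pruned

variable {n : ℕ} {C CP : ℕ → ℕ} (hP : IsPrunedCoverArray n C CP) {i : ℕ} (hi : 1 ≤ i)
  (hin : i ≤ n)
include hP hi hin

theorem IsPrunedCoverArray.eq_of_ne_zero (hCPi : CP i ≠ 0) : CP i = C i :=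
  (hP i hi hin).2 fun ht => hCPi ((hP i hi hin).1 ht)

theorem IsPrunedCoverArray.shiftConnected_of_not_totallyCovered (hCi : C i ≠ 0)
    (hnt : ¬ TotallyCovered n C i) : ShiftConnected (CoverRel n CP) (C i) (i - C i) := by
  have hCPi : CP i = C i := (hP i hi hin).2 hnt
  simpa [hCPi] using shiftConnected_coverRel (γ := CP) hi hin (by rwa [hCPi])

end Pruned

theorem eqvGen_coverRel_le {n : ℕ} {γ : ℕ → ℕ} {R : ℕ → ℕ → Prop}
    (h : ∀ i, 1 ≤ i → i ≤ n → γ i ≠ 0 → ShiftConnected R (γ i) (i - γ i)) :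
    Relation.EqvGen (CoverRel n γ) ≤ Relation.EqvGen R := fun p q hpq =>
  (Relation.EqvGen.is_equivalence R).eqvGen_iff.mp <| Relation.EqvGen.mono (fun a b hab => by
    obtain ⟨i, j, hi, hin, hγi, hj, hjγ, hpair⟩ := hab
    have hj' := h i hi hin hγi j hj hjγ
    rw [Nat.add_comm j] at hj'
    rcases Set.pair_eq_pair_iff.mp hpair with ⟨rfl, rfl⟩ | ⟨rfl, rfl⟩
    exacts [hj', hj'.symm _ _]) p q hpq

section Induction

variable {α : Type*} {x : List α}

theorem shiftConnected_of_occursAt {R : ℕ → ℕ → Prop} {k c d : ℕ}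
    (ih : ∀ k' < k, ∀ m, PrefixCovers x m k' → ShiftConnected R m (k' - m))
    (hc : PrefixCovers x c k) (hd : PrefixOccursAt x d c) (hdk : d + c < k) :
    ShiftConnected R c d := by
  rcases Nat.eq_zero_or_pos d with rfl | hd0
  · exact fun t _ _ => .refl t
  · simpa using ih (d + c) hdk c (hc.extend hd0 hd hdk.le)

theorem shiftConnected_of_lt_prefixCovers {R : ℕ → ℕ → Prop} {k c m : ℕ}
    (ih : ∀ k' < k, ∀ m, PrefixCovers x m k' → ShiftConnected R m (k' - m))
    (hc : PrefixCovers x c k) (hck : ShiftConnected R c (k - c)) (hm : PrefixCovers x m k)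
    (hcm : c < m) : ShiftConnected R m (k - m) := by
  intro t ht htm
  obtain ⟨d, hdt, htd, hdm, hd⟩ := (hm.of_shorter hc hcm).exists_occursAt ht htm
  have left : Relation.EqvGen R (t - d) t := by
    simpa [Nat.sub_add_cancel hdt.le] using
      shiftConnected_of_occursAt ih hc hd (by have := hm.2.1; omega) (t - d) (by omega) (by omega)
  have right : Relation.EqvGen R (t - d) (t + (k - m)) := by
    have hd' : PrefixOccursAt x (k - m + d) c := hm.occursAt_suffix.add hd hdm
    rcases (show k - m + d + c ≤ k by have := hm.2.1; omega).lt_or_eq with hlt | heq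
    · have := shiftConnected_of_occursAt ih hc hd' hlt (t - d) (by omega) (by omega)
      rwa [show t - d + (k - m + d) = t + (k - m) by omega] at this
    · have := hck (t - d) (by omega) (by omega)
      rwa [show t - d + (k - c) = t + (k - m) by omega] at this
  exact (Relation.EqvGen.is_equivalence R).trans (left.symm _ _) right

variable {C CP : ℕ → ℕ} (hC : IsMinCoverArray x C) (hP : IsPrunedCoverArray x.length C CP)
include hC hP

theorem shiftConnected_minCover {k : ℕ}
    (ih : ∀ k' < k, ∀ m, PrefixCovers x m k' → ShiftConnected (CoverRel x.length CP) m (k' - m))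
    (hk : 1 ≤ k) (hkn : k ≤ x.length) (hCk : C k ≠ 0) :
    ShiftConnected (CoverRel x.length CP) (C k) (k - C k) := by
  by_cases htc : TotallyCovered x.length C k
  · obtain ⟨i, hki, hin, hCi, hik, hnt⟩ := exists_not_totallyCovered htc
    have hcovk := hC.prefixCovers hk hkn hCk
    have hcovi := hC.prefixCovers (by omega) hin hCi
    have := hcovk.2.1
    have := hcovi.2.1
    have hocc := hcovi.occursAt_suffix.sub hcovk.occursAt_suffix hik (by omega)
    have hδ := shiftConnected_of_occursAt ih hcovk hocc (by omega)
    intro t ht htk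
    have hedge := hP.shiftConnected_of_not_totallyCovered (by omega) hin hCi hnt
      (t + (k - C k - (i - C i))) (by omega) (by omega)
    rw [show t + (k - C k - (i - C i)) + (i - C i) = t + (k - C k) by omega] at hedge
    exact (Relation.EqvGen.is_equivalence _).trans (hδ t ht htk) hedge
  · exact hP.shiftConnected_of_not_totallyCovered hk hkn hCk htc

theorem shiftConnected_of_prefixCovers {m k : ℕ} (h : PrefixCovers x m k) :
    ShiftConnected (CoverRel x.length CP) m (k - m) := by
  induction k using Nat.strong_induction_on generalizing m with
  | _ k ih =>
  obtain ⟨hCk, hCkm⟩ := hC.le_of_prefixCovers h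
  have hkn := h.2.2.1
  have hk := h.2.1
  have hcov := hC.prefixCovers (by omega) hkn hCk
  have hmin := shiftConnected_minCover hC hP (fun k' hk' _ => ih k' hk') (by omega) hkn hCk
  rcases hCkm.eq_or_lt with heq | hlt
  · exact heq ▸ hmin
  · exact shiftConnected_of_lt_prefixCovers (fun k' hk' _ => ih k' hk') hcov hmin h hlt

end Induction

/-- Pruning does not change the connected components of the cover graph:
the equivalence relations generated by `R_{C^P}` and by `R_C` coincide. -/
theorem pruning_preserves_components {α : Type*} (x : List α) (C CP : ℕ → ℕ)
    (hC : IsMinCoverArray x C) (hP : IsPrunedCoverArray x.length C CP) :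
    Relation.EqvGen (CoverRel x.length CP) = Relation.EqvGen (CoverRel x.length C) := by
  refine le_antisymm (eqvGen_coverRel_le fun i hi hin hCPi => ?_) (eqvGen_coverRel_le
    fun i hi hin hCi => shiftConnected_of_prefixCovers hC hP (hC.prefixCovers hi hin hCi))
  have hCPi' := hP.eq_of_ne_zero hi hin hCPi
  rw [hCPi'] at hCPi ⊢
  exact shiftConnected_coverRel hi hin hCPi
end

section
/- Let x be a string of length n with minimal cover array C. If positions p and q in {1,…,n} are related by the equivalence relation generated by R_C (i.e., p and q lie in the same connected component of the cover graph of C), then x[p] = x[q]. -/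
/-! Every cover of `y` is both a prefix and a suffix of `y`. So if `C i ≠ 0`, the shortest cover
of `x[1..i]` is read both at positions `1..C i` and at `i - C i + 1..i`, which is exactly what
an edge of `R_C` joins; equality of characters is an equivalence relation, so it then holds on
whole components of the cover graph. -/

theorem List.getElem?_eq_of_prefix_of_suffix {α : Type*} {w y : List α} (hpre : w <+: y)
    (hsuf : w <:+ y) {j : ℕ} (hj : j < w.length) :
    y[j]? = y[y.length - w.length + j]? := by
  have := hsuf.length_le
  rw [List.getElem?_eq_getElem (by omega), List.getElem?_eq_getElem (by omega),
    ← hpre.getElem hj, ← hsuf.getElem hj]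

namespace IsCover

variable {α : Type*} {w y : List α}

theorem isPrefix_s17 (hw : IsCover w y) : w <+: y := by
  obtain ⟨hlt, P, hPpos, hPocc, hPcov⟩ := hw
  have hfirst : 1 ∈ P.biUnion fun i => Finset.Icc i (i + w.length - 1) := by
    rw [hPcov]; exact Finset.mem_Icc.mpr ⟨le_rfl, by omega⟩
  obtain ⟨a, haP, ha⟩ := Finset.mem_biUnion.mp hfirst
  have ha1 : a = 1 := le_antisymm (Finset.mem_Icc.mp ha).1 (hPpos a haP).1
  have hocc := hPocc a haP
  rw [ha1, Nat.sub_self, List.drop_zero] at hocc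
  exact List.prefix_iff_eq_take.mpr hocc.symm

theorem isSuffix_s17 (hw : IsCover w y) : w <:+ y := by
  obtain ⟨hlt, P, hPpos, hPocc, hPcov⟩ := hw
  have hlast : y.length ∈ P.biUnion fun i => Finset.Icc i (i + w.length - 1) := by
    rw [hPcov]; exact Finset.mem_Icc.mpr ⟨by omega, le_rfl⟩
  obtain ⟨b, hbP, hb⟩ := Finset.mem_biUnion.mp hlast
  have hb' : b - 1 = y.length - w.length := by
    have := (hPpos b hbP).2
    have := Finset.mem_Icc.mp hb
    omega
  have hocc := hPocc b hbP
  rw [hb', List.take_of_length_le (by simp only [List.length_drop]; omega)] at hocc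
  exact List.suffix_iff_eq_drop.mpr hocc.symm

theorem getElem?_eq (hw : IsCover w y) {j : ℕ} (hj : j < w.length) :
    y[j]? = y[y.length - w.length + j]? :=
  List.getElem?_eq_of_prefix_of_suffix hw.isPrefix_s17 hw.isSuffix_s17 hj

end IsCover

theorem IsMinCoverArray.exists_cover {α : Type*} {x : List α} {C : ℕ → ℕ}
    (hC : IsMinCoverArray x C) {i : ℕ} (hi1 : 1 ≤ i) (hi2 : i ≤ x.length) (hCi : C i ≠ 0) :
    ∃ w, IsCover w (x.take i) ∧ w.length = C i := by
  rcases hC i hi1 hi2 with ⟨_, h0⟩ | ⟨w, hw, hlen, _⟩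
  · exact absurd h0 hCi
  · exact ⟨w, hw, hlen.symm⟩

theorem IsMinCoverArray.getElem?_eq_of_coverRel {α : Type*} {x : List α} {C : ℕ → ℕ}
    (hC : IsMinCoverArray x C) {p q : ℕ} (h : CoverRel x.length C p q) :
    x[p - 1]? = x[q - 1]? := by
  obtain ⟨i, j, hi1, hi2, hCi, hj1, hj2, hpq⟩ := h
  obtain ⟨w, hw, hlen⟩ := hC.exists_cover hi1 hi2 hCi
  have hwi : w.length < i := by simpa [hi2] using hw.1
  have hedge : x[j - 1]? = x[i - C i + j - 1]? := by
    have := hw.getElem?_eq (j := j - 1) (by omega)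
    rw [List.length_take_of_le hi2, hlen] at this
    rwa [List.getElem?_take_of_lt (by omega), List.getElem?_take_of_lt (by omega),
      ← Nat.add_sub_assoc hj1] at this
  rcases Set.pair_eq_pair_iff.mp hpq with ⟨rfl, rfl⟩ | ⟨rfl, rfl⟩
  · exact hedge
  · exact hedge.symm

theorem eq_char_of_coverRel_general {α : Type*} (x : List α) (C : ℕ → ℕ)
    (hC : IsMinCoverArray x C) (p q : ℕ)
    (h : Relation.EqvGen (CoverRel x.length C) p q) :
    x[p - 1]? = x[q - 1]? :=
  (Equivalence.eqvGen_iff (r := fun a b => x[a - 1]? = x[b - 1]?)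
    ⟨fun _ => rfl, Eq.symm, Eq.trans⟩).mp
    (Relation.EqvGen.mono (fun _ _ => hC.getElem?_eq_of_coverRel) p q h)

/-- Positions in the same connected component of the cover graph of `C`
carry equal characters (1-based indexing). -/
theorem eq_char_of_coverRel {α : Type*} (x : List α) (C : ℕ → ℕ)
    (hC : IsMinCoverArray x C) (p q : ℕ)
    (hp1 : 1 ≤ p) (hp2 : p ≤ x.length) (hq1 : 1 ≤ q) (hq2 : q ≤ x.length)
    (h : Relation.EqvGen (CoverRel x.length C) p q) :
    x[p - 1]? = x[q - 1]? :=
  eq_char_of_coverRel_general x C hC p q h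
end
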